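/- Value of a local optimum against its supersets (Lemma 4, second inequality): let F : Finset V → ℝ be a set function on a finite set V and let S ⊆ V be a local optimum of F. Then for every set J with S ⊆ J ⊆ V, F(J) ≤ F(S) − C(|J \ S|, 2) · λ_F(J, 2), where C(n, 2) = n(n−1)/2 denotes the binomial coefficient. -/

import Mathlib

open Finset

variable {V : Type*} [Fintype V] [DecidableEq V]

/-- The marginal gain `F_S(A) = F(A ∪ S) − F(A)` generalizes `F_x(A)` via `S = {x}`.
The submodularity index (SmI) of `F` for a set `L ⊆ V` and cardinality `k` is the
minimum of `∑ x ∈ S, F_x(A) − F_S(A)` over all pairs `(S, A)` with `A ⊆ L`,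
`S ∩ A = ∅`, and `|S| ≤ k`. -/
noncomputable def smI (F : Finset V → ℝ) (L : Finset V) (k : ℕ) : ℝ :=
  (Finset.univ.filter (fun p : Finset V × Finset V =>
      p.2 ⊆ L ∧ p.1 ∩ p.2 = ∅ ∧ p.1.card ≤ k)).inf'
    ⟨(∅, ∅), by simp⟩
    (fun p => (∑ x ∈ p.1, (F (p.2 ∪ {x}) - F p.2)) - (F (p.2 ∪ p.1) - F p.2))

/-- A set `S ⊆ V` is a local optimum of `F` if `F(S) ≥ F(S \ {a})` for every `a ∈ S`
and `F(S) ≥ F(S ∪ {a})` for every `a ∉ S`. -/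
def IsLocalOptimum (F : Finset V → ℝ) (S : Finset V) : Prop :=
  (∀ a ∈ S, F (S \ {a}) ≤ F S) ∧ (∀ a ∉ S, F (S ∪ {a}) ≤ F S)

/-! Local optimality gives `F_x(S) ≤ 0` for every `x ∉ S`. Enlarging the base set by one element
lowers a marginal gain by at least `λ = λ_F(J, 2)`, so `F_x(A) ≤ F_x(S) - |A \ S| λ`. Adding the
elements of `J \ S` to `S` one at a time, the `k`-th contributes at most `-(k - 1) λ`, and these
sum to `-C(|J \ S|, 2) λ`. -/

section

variable (F : Finset V → ℝ) {L : Finset V}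

lemma smI_le {k : ℕ} {T A : Finset V} (hA : A ⊆ L) (hTA : Disjoint T A) (hT : T.card ≤ k) :
    smI F L k ≤ (∑ x ∈ T, (F (A ∪ {x}) - F A)) - (F (A ∪ T) - F A) := by
  unfold smI
  exact Finset.inf'_le _
    (mem_filter.mpr ⟨mem_univ (T, A), hA, disjoint_iff_inter_eq_empty.mp hTA, hT⟩)

lemma smI_two_le_pair (A : Finset V) {x y : V} (hA : A ⊆ L) (hx : x ∉ A) (hy : y ∉ A)
    (hxy : x ≠ y) :
    smI F L 2 ≤ (F (A ∪ {x}) - F A) + (F (A ∪ {y}) - F A) - (F (A ∪ {x, y}) - F A) := by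
  have hdisj : Disjoint {x, y} A := by
    rw [disjoint_insert_left, disjoint_singleton_left]
    exact ⟨hx, hy⟩
  simpa only [sum_pair hxy] using smI_le F hA hdisj card_le_two

lemma marginal_insert_le_sub_smI (A : Finset V) {x y : V} (hA : A ⊆ L) (hx : x ∉ A)
    (hy : y ∉ A) (hxy : x ≠ y) :
    F (A ∪ {y} ∪ {x}) - F (A ∪ {y}) ≤ F (A ∪ {x}) - F A - smI F L 2 := by
  have hpair := smI_two_le_pair F A hA hx hy hxy
  have hunion : A ∪ {x, y} = A ∪ {y} ∪ {x} := by grind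
  rw [hunion] at hpair
  linarith

lemma marginal_le_sub_card_mul_smI {S D : Finset V} {x : V} (hD : Disjoint S D)
    (hL : S ∪ D ⊆ L) (hx : x ∉ S ∪ D) :
    F (S ∪ D ∪ {x}) - F (S ∪ D) ≤ F (S ∪ {x}) - F S - D.card * smI F L 2 := by
  induction D using Finset.induction_on with
  | empty => simp
  | insert y D hyD ih =>
    have hunion : S ∪ insert y D = S ∪ D ∪ {y} := by grind
    rw [hunion] at hL hx ⊢
    obtain ⟨hyS, hSD⟩ := disjoint_insert_right.mp hD
    have hxSD : x ∉ S ∪ D := fun h => hx (mem_union_left _ h)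
    have hxy : x ≠ y := fun h => hx (mem_union_right _ (mem_singleton.mpr h))
    have hySD : y ∉ S ∪ D := by simp only [mem_union, not_or]; exact ⟨hyS, hyD⟩
    have hstep := marginal_insert_le_sub_smI F (S ∪ D) (union_subset_left hL) hxSD hySD hxy
    have hprev := ih hSD (union_subset_left hL) hxSD
    rw [card_insert_of_notMem hyD]
    push_cast
    linarith

end

lemma choose_two_succ (n : ℕ) : (n + 1).choose 2 = n.choose 2 + n := by
  rw [Nat.choose_succ_succ, Nat.choose_one_right, add_comm]

lemma IsLocalOptimum.le_sub_choose_mul_smI {F : Finset V → ℝ} {S D L : Finset V}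
    (hS : IsLocalOptimum F S) (hD : Disjoint S D) (hL : S ∪ D ⊆ L) :
    F (S ∪ D) ≤ F S - (D.card.choose 2 : ℝ) * smI F L 2 := by
  induction D using Finset.induction_on with
  | empty => simp
  | insert x D hxD ih =>
    have hunion : S ∪ insert x D = S ∪ D ∪ {x} := by grind
    rw [hunion] at hL ⊢
    obtain ⟨hxS, hSD⟩ := disjoint_insert_right.mp hD
    have hxSD : x ∉ S ∪ D := by simp only [mem_union, not_or]; exact ⟨hxS, hxD⟩
    have hdecay := marginal_le_sub_card_mul_smI F hSD (union_subset_left hL) hxSD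
    have hprev := ih hSD (union_subset_left hL)
    have hopt := hS.2 x hxS
    rw [card_insert_of_notMem hxD, choose_two_succ]
    push_cast
    linarith

/-- Value of a local optimum against its supersets (Lemma 4, second inequality):
if `S` is a local optimum of `F`, then for every `J` with `S ⊆ J ⊆ V`,
`F(J) ≤ F(S) − C(|J \ S|, 2) · λ_F(J, 2)`. -/
theorem local_optimum_superset_bound (F : Finset V → ℝ)
    (S : Finset V) (hS : IsLocalOptimum F S)
    (J : Finset V) (hJ : S ⊆ J) :
    F J ≤ F S - ((J \ S).card.choose 2 : ℝ) * smI F J 2 := by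
  have hbound := hS.le_sub_choose_mul_smI disjoint_sdiff (union_sdiff_of_subset hJ).subset
  rwa [union_sdiff_of_subset hJ] at hbound
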